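/- Let L, ν be natural numbers with ν+1 < L, h ∈ ℂ^L, f ∈ ℂ^{ν+1}, N0 > 0, and σ ∈ (0,1]. Define ε₁ and ε₂ as below and assume ε₂ is negative definite (hence invertible). Then for every measurable W : [−π,π] → ℂ with ∫_{−π}^{π}|W(ω)|² dω < ∞ and every b ∈ ℂ^{L−ν−1} (defining B(ω) = Σ_{j=0}^{L−ν−2} b_j e^{iω(ν+1+j)}), one has I_LB(W,F,B) ≤ J(F) − ε₁†·ε₂⁻¹·ε₁, where J(F) = 1 + (1/2π)∫_{−π}^{π}[log(1+|F(ω)|²) + M(ω)·(1+|F(ω)|²)] dω. -/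

import Mathlib

/-
For fixed `F` the integrand of `I_LB` is, at every frequency, a concave quadratic in `W(ω)`.
Completing the square in `conj(F)·W` bounds it by an expression free of `W`, the gap being
`(N0+|H|²)/(1+|F|²)·|conj(F)·W − conj(H·(1+|F|²+σ F conj B))/(N0+|H|²)|²`. Integrating the bound
gives `J(F) + 2 Re(bᵀε₁) + Re(bᵀε₂ b̄)`, a quadratic in `b̄`; since `ε₂` is negative definite its
maximum, attained at `b̄ = −ε₂⁻¹ε₁`, is `J(F) − ε₁†ε₂⁻¹ε₁`.
-/

open Complex Real MeasureTheory Matrix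
open scoped ComplexOrder

/-- DTFT of the channel taps `h ∈ ℂ^L`. -/

noncomputable def Hdtft {L : ℕ} (h : Fin L → ℂ) (ω : ℝ) : ℂ :=
  ∑ ℓ : Fin L, h ℓ * Complex.exp (Complex.I * (ω : ℂ) * ((ℓ : ℕ) : ℂ))

/-- DTFT of the target-response taps `f ∈ ℂ^{ν+1}`. -/

noncomputable def Fdtft {ν : ℕ} (f : Fin (ν + 1) → ℂ) (ω : ℝ) : ℂ :=
  ∑ k : Fin (ν + 1), f k * Complex.exp (Complex.I * (ω : ℂ) * ((k : ℕ) : ℂ))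

/-- DTFT of the feedback-filter taps `b ∈ ℂ^{L−ν−1}` (supported on taps ν+1,…,L−1). -/

noncomputable def Bdtft {L ν : ℕ} (b : Fin (L - ν - 1) → ℂ) (ω : ℝ) : ℂ :=
  ∑ j : Fin (L - ν - 1), b j * Complex.exp (Complex.I * (ω : ℂ) * ((ν + 1 + (j : ℕ) : ℕ) : ℂ))

/-- The LMMSE kernel `M(ω) = −N0/(N0+|H(ω)|²)`. -/

noncomputable def Mker (N0 : ℝ) (H : ℝ → ℂ) (ω : ℝ) : ℝ :=
  -N0 / (N0 + ‖H ω‖ ^ 2)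

/-- `M̃(ω) = σ²(1+M(ω)) − σ`. -/

noncomputable def Mtker (N0 σ : ℝ) (H : ℝ → ℂ) (ω : ℝ) : ℝ :=
  σ ^ 2 * (1 + Mker N0 H ω) - σ

/-- The exponential vector `φ(ω) = (e^{iω(ν+1)},…,e^{iω(L−1)})ᵀ`. -/

noncomputable def phiVec (L ν : ℕ) (j : Fin (L - ν - 1)) (ω : ℝ) : ℂ :=
  Complex.exp (Complex.I * (ω : ℂ) * ((ν + 1 + (j : ℕ) : ℕ) : ℂ))

/-- The vector `ε₁ = (σ/2π)∫ M conj(F) φ dω`. -/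

noncomputable def eps1 (L ν : ℕ) (N0 σ : ℝ) (H F : ℝ → ℂ) (j : Fin (L - ν - 1)) : ℂ :=
  ((σ / (2 * π) : ℝ) : ℂ) *
    ∫ ω in (-π)..π, ((Mker N0 H ω : ℝ) : ℂ) * (starRingEnd ℂ) (F ω) * phiVec L ν j ω

/-- The matrix `ε₂ = (1/2π)∫ (M̃|F|²/(1+|F|²)) φ φ† dω`. -/

noncomputable def eps2 (L ν : ℕ) (N0 σ : ℝ) (H F : ℝ → ℂ) :
    Matrix (Fin (L - ν - 1)) (Fin (L - ν - 1)) ℂ := fun j k =>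
  ((1 / (2 * π) : ℝ) : ℂ) *
    ∫ ω in (-π)..π,
      ((Mtker N0 σ H ω * ‖F ω‖ ^ 2 / (1 + ‖F ω‖ ^ 2) : ℝ) : ℂ) *
        (phiVec L ν j ω * (starRingEnd ℂ) (phiVec L ν k ω))

/-- The quantity `Λ(ω)` appearing in the MILB. -/

noncomputable def Lam (N0 σ : ℝ) (W H F B : ℝ → ℂ) (ω : ℝ) : ℝ :=
  ‖F ω * W ω‖ ^ 2 * (N0 + ‖H ω‖ ^ 2) +
    σ * ‖F ω * B ω‖ ^ 2 -
    2 * σ * ‖F ω‖ ^ 2 * (H ω * W ω * (starRingEnd ℂ) (B ω)).re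

/-- The mutual-information lower bound functional `I_LB(W,F,B)`. -/

noncomputable def ILB (N0 σ : ℝ) (W H F B : ℝ → ℂ) : ℝ :=
  (1 / (2 * π)) *
      ∫ ω in (-π)..π,
        (Real.log (1 + ‖F ω‖ ^ 2) - ‖F ω‖ ^ 2 -
          Lam N0 σ W H F B ω / (1 + ‖F ω‖ ^ 2)) +
    (1 / π) *
      ∫ ω in (-π)..π, ((starRingEnd ℂ) (F ω) * (W ω * H ω - (σ : ℂ) * B ω)).re

/-- `J(F) = 1 + (1/2π)∫ [log(1+|F|²) + M(1+|F|²)]`. -/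

noncomputable def Jfun (N0 : ℝ) (H F : ℝ → ℂ) : ℝ :=
  1 + (1 / (2 * π)) *
    ∫ ω in (-π)..π,
      (Real.log (1 + ‖F ω‖ ^ 2) + Mker N0 H ω * (1 + ‖F ω‖ ^ 2))

lemma re_dotProduct_mulVec_add_le_of_posDef_neg {𝕜 n : Type*} [RCLike 𝕜] [Fintype n]
    [DecidableEq n] {S : Matrix n n 𝕜} (hS : (-S).PosDef) (x c : n → 𝕜) :
    RCLike.re (star c ⬝ᵥ S *ᵥ c) + 2 * RCLike.re (star c ⬝ᵥ x) ≤
      -RCLike.re (star x ⬝ᵥ S⁻¹ *ᵥ x) := by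
  have hdet : IsUnit S.det := (Matrix.isUnit_iff_isUnit_det S).mp (by simpa using hS.isUnit.neg)
  have hS_herm : Sᴴ = S := neg_injective (by simpa using hS.isHermitian.eq)
  set v := c + S⁻¹ *ᵥ x
  have hSv : S *ᵥ v = S *ᵥ c + x := by
    rw [mulVec_add, mulVec_mulVec, mul_nonsing_inv _ hdet, one_mulVec]
  have hcx : RCLike.re (star x ⬝ᵥ c) = RCLike.re (star c ⬝ᵥ x) := by
    rw [← RCLike.conj_re, ← RCLike.star_def, ← star_dotProduct_star, star_star]
  have hexpand : star v ⬝ᵥ S *ᵥ v =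
      star c ⬝ᵥ S *ᵥ c + star c ⬝ᵥ x + star x ⬝ᵥ c + star x ⬝ᵥ S⁻¹ *ᵥ x := by
    rw [hSv, star_add, star_mulVec, conjTranspose_nonsing_inv, hS_herm, add_dotProduct,
      dotProduct_add, dotProduct_add, ← dotProduct_mulVec, mulVec_mulVec,
      nonsing_inv_mul _ hdet, one_mulVec, ← dotProduct_mulVec]
    ring
  have hv : 0 ≤ RCLike.re (star v ⬝ᵥ (-S) *ᵥ v) := hS.posSemidef.re_dotProduct_nonneg v
  rw [neg_mulVec, dotProduct_neg, map_neg, hexpand] at hv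
  simp only [map_add] at hv
  linarith

@[fun_prop]
lemma continuous_Hdtft {L : ℕ} (h : Fin L → ℂ) : Continuous (Hdtft h) := by
  unfold Hdtft; fun_prop

@[fun_prop]
lemma continuous_Fdtft {ν : ℕ} (f : Fin (ν + 1) → ℂ) : Continuous (Fdtft f) := by
  unfold Fdtft; fun_prop

@[fun_prop]
lemma continuous_Bdtft {L ν : ℕ} (b : Fin (L - ν - 1) → ℂ) :
    Continuous (Bdtft (L := L) (ν := ν) b) := by
  unfold Bdtft; fun_prop

@[fun_prop]
lemma continuous_phiVec (L ν : ℕ) (j : Fin (L - ν - 1)) : Continuous (phiVec L ν j) := by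
  unfold phiVec; fun_prop

lemma continuous_Mker {N0 : ℝ} (hN0 : 0 < N0) {H : ℝ → ℂ} (hH : Continuous H) :
    Continuous (Mker N0 H) := by
  unfold Mker; fun_prop (disch := intro; positivity)

lemma continuous_Mtker {N0 : ℝ} (hN0 : 0 < N0) (σ : ℝ) {H : ℝ → ℂ} (hH : Continuous H) :
    Continuous (Mtker N0 σ H) := by
  have := continuous_Mker hN0 hH
  unfold Mtker; fun_prop

lemma Bdtft_eq_sum_phiVec {L ν : ℕ} (b : Fin (L - ν - 1) → ℂ) (ω : ℝ) :
    Bdtft b ω = ∑ j, b j * phiVec L ν j ω := rfl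

noncomputable def milbIntegrand (N0 σ : ℝ) (W H F B : ℝ → ℂ) (ω : ℝ) : ℝ :=
  Real.log (1 + ‖F ω‖ ^ 2) - ‖F ω‖ ^ 2 - Lam N0 σ W H F B ω / (1 + ‖F ω‖ ^ 2) +
    2 * ((starRingEnd ℂ) (F ω) * (W ω * H ω - (σ : ℂ) * B ω)).re

noncomputable def milbBound (N0 σ : ℝ) (H F B : ℝ → ℂ) (ω : ℝ) : ℝ :=
  1 + (Real.log (1 + ‖F ω‖ ^ 2) + Mker N0 H ω * (1 + ‖F ω‖ ^ 2)) +
    2 * σ * (Mker N0 H ω * (F ω * (starRingEnd ℂ) (B ω)).re) +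
    Mtker N0 σ H ω * ‖F ω‖ ^ 2 / (1 + ‖F ω‖ ^ 2) * ‖B ω‖ ^ 2

lemma milbIntegrand_gap {N0 : ℝ} (hN0 : 0 < N0) (σ : ℝ) (W H F B : ℝ → ℂ) (ω : ℝ) :
    milbBound N0 σ H F B ω - milbIntegrand N0 σ W H F B ω =
      ‖((N0 + ‖H ω‖ ^ 2 : ℝ) : ℂ) * ((starRingEnd ℂ) (F ω) * W ω) - (starRingEnd ℂ)
          (H ω * (((1 + ‖F ω‖ ^ 2 : ℝ) : ℂ) + σ * F ω * (starRingEnd ℂ) (B ω)))‖ ^ 2 /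
        ((N0 + ‖H ω‖ ^ 2) * (1 + ‖F ω‖ ^ 2)) := by
  have hS : N0 + ‖H ω‖ ^ 2 ≠ 0 := by positivity
  have hA : 1 + ‖F ω‖ ^ 2 ≠ 0 := by positivity
  unfold milbBound milbIntegrand Lam Mtker Mker
  simp only [Complex.sq_norm, Complex.normSq_apply] at hS hA ⊢
  simp only [Complex.mul_re, Complex.mul_im, Complex.sub_re, Complex.sub_im, Complex.add_re,
    Complex.add_im, Complex.conj_re, Complex.conj_im, Complex.ofReal_re, Complex.ofReal_im]
  field_simp
  ring

lemma milbIntegrand_le {N0 : ℝ} (hN0 : 0 < N0) (σ : ℝ) (W H F B : ℝ → ℂ) (ω : ℝ) :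
    milbIntegrand N0 σ W H F B ω ≤ milbBound N0 σ H F B ω := by
  rw [← sub_nonneg, milbIntegrand_gap hN0]
  positivity

lemma integrable_of_integrable_sq_norm {α E : Type*} [MeasurableSpace α] [NormedAddCommGroup E]
    {μ : Measure α} [IsFiniteMeasure μ] {f : α → E} (hf : AEStronglyMeasurable f μ)
    (hf2 : Integrable (fun x => ‖f x‖ ^ 2) μ) : Integrable f μ :=
  ((memLp_two_iff_integrable_sq_norm hf).2 hf2).integrable one_le_two

lemma IntervalIntegrable.re_mul_continuous {a b : ℝ} {W c : ℝ → ℂ}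
    (hW : IntervalIntegrable W volume a b) (hc : Continuous c) :
    IntervalIntegrable (fun ω => (c ω * W ω).re) volume a b :=
  have h := hW.continuousOn_mul hc.continuousOn
  ⟨h.1.re, h.2.re⟩

lemma intervalIntegrable_of_integrableOn_sq_norm {E : Type*} [NormedAddCommGroup E] {a b : ℝ}
    (hab : a ≤ b) {W : ℝ → E} (hWm : AEStronglyMeasurable W (volume.restrict (Set.Icc a b)))
    (hW2 : IntegrableOn (fun ω => ‖W ω‖ ^ 2) (Set.Icc a b)) : IntervalIntegrable W volume a b := by
  have hW : IntegrableOn W (Set.Icc a b) := integrable_of_integrable_sq_norm hWm hW2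
  rw [← Set.uIcc_of_le hab] at hW
  exact hW.intervalIntegrable

lemma intervalIntegral_re_sum_mul {ι : Type*} [Fintype ι] {a b : ℝ} (c : ι → ℂ)
    {ψ : ι → ℝ → ℂ} (hψ : ∀ i, IntervalIntegrable (ψ i) volume a b) :
    ∫ x in a..b, (∑ i, c i * ψ i x).re = (∑ i, c i * ∫ x in a..b, ψ i x).re := by
  have hterm : ∀ i ∈ Finset.univ, IntervalIntegrable (fun x => c i * ψ i x) volume a b :=
    fun i _ => (hψ i).const_mul (c i)
  have hsum : IntervalIntegrable (fun x => ∑ i, c i * ψ i x) volume a b := by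
    simpa only [Finset.sum_fn] using IntervalIntegrable.sum _ hterm
  refine (intervalIntegral.intervalIntegral_re hsum).trans ?_
  rw [intervalIntegral.integral_finsetSum hterm]
  simp only [intervalIntegral.integral_const_mul, RCLike.re_to_complex]

lemma integral_Mker_re_Bdtft_eq_eps1 (L ν : ℕ) {N0 : ℝ} (hN0 : 0 < N0) (σ : ℝ) {H F : ℝ → ℂ}
    (hH : Continuous H) (hF : Continuous F) (b : Fin (L - ν - 1) → ℂ) :
    1 / (2 * π) * ∫ ω in (-π)..π,
        2 * σ * (Mker N0 H ω * (F ω * (starRingEnd ℂ) (Bdtft b ω)).re) =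
      2 * (b ⬝ᵥ eps1 L ν N0 σ H F).re := by
  set ψ : Fin (L - ν - 1) → ℝ → ℂ :=
    fun j ω => (Mker N0 H ω : ℂ) * (starRingEnd ℂ) (F ω) * phiVec L ν j ω
  have hψ : ∀ j, IntervalIntegrable (ψ j) volume (-π) π := fun j => by
    have := continuous_Mker hN0 hH
    exact Continuous.intervalIntegrable (by fun_prop) _ _
  have hpt : ∀ ω, Mker N0 H ω * (F ω * (starRingEnd ℂ) (Bdtft b ω)).re =
      (∑ j, b j * ψ j ω).re := fun ω => by
    rw [← Complex.re_ofReal_mul, ← Complex.conj_re]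
    congr 1
    rw [map_mul, map_mul, Complex.conj_ofReal, Complex.conj_conj, Bdtft_eq_sum_phiVec,
      Finset.mul_sum, Finset.mul_sum]
    exact Finset.sum_congr rfl fun j _ => by ring
  simp_rw [hpt]
  rw [intervalIntegral.integral_const_mul, intervalIntegral_re_sum_mul b hψ]
  unfold eps1 dotProduct
  simp_rw [mul_left_comm (b _) ((σ / (2 * π) : ℝ) : ℂ), ← Finset.mul_sum, Complex.re_ofReal_mul]
  ring

lemma integral_Mtker_norm_Bdtft_eq_eps2 (L ν : ℕ) {N0 : ℝ} (hN0 : 0 < N0) (σ : ℝ) {H F : ℝ → ℂ}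
    (hH : Continuous H) (hF : Continuous F) (b : Fin (L - ν - 1) → ℂ) :
    1 / (2 * π) * ∫ ω in (-π)..π,
        Mtker N0 σ H ω * ‖F ω‖ ^ 2 / (1 + ‖F ω‖ ^ 2) * ‖Bdtft b ω‖ ^ 2 =
      (b ⬝ᵥ eps2 L ν N0 σ H F *ᵥ star b).re := by
  set ζ : Fin (L - ν - 1) × Fin (L - ν - 1) → ℝ → ℂ := fun p ω =>
    ((Mtker N0 σ H ω * ‖F ω‖ ^ 2 / (1 + ‖F ω‖ ^ 2) : ℝ) : ℂ) *
      (phiVec L ν p.1 ω * (starRingEnd ℂ) (phiVec L ν p.2 ω))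
  have hζ : ∀ p, IntervalIntegrable (ζ p) volume (-π) π := fun p => by
    have := continuous_Mtker hN0 σ hH
    exact Continuous.intervalIntegrable (by fun_prop (disch := intro; positivity)) _ _
  have hpt : ∀ ω, Mtker N0 σ H ω * ‖F ω‖ ^ 2 / (1 + ‖F ω‖ ^ 2) * ‖Bdtft b ω‖ ^ 2 =
      (∑ p, b p.1 * (starRingEnd ℂ) (b p.2) * ζ p ω).re := fun ω => by
    have hnorm : ‖Bdtft b ω‖ ^ 2 = (Bdtft b ω * (starRingEnd ℂ) (Bdtft b ω)).re := by
      rw [Complex.mul_conj, Complex.ofReal_re, Complex.normSq_eq_norm_sq]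
    rw [hnorm, ← Complex.re_ofReal_mul, Bdtft_eq_sum_phiVec, map_sum, Finset.sum_mul_sum,
      Fintype.sum_prod_type, Finset.mul_sum]
    refine congrArg Complex.re (Finset.sum_congr rfl fun j _ => ?_)
    rw [Finset.mul_sum]
    exact Finset.sum_congr rfl fun k _ => by simp only [ζ, map_mul]; ring
  simp_rw [hpt]
  rw [intervalIntegral_re_sum_mul _ hζ]
  unfold eps2 dotProduct mulVec dotProduct
  simp_rw [Finset.mul_sum, Fintype.sum_prod_type, ← Complex.re_ofReal_mul, Finset.mul_sum]
  congr 1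
  exact Finset.sum_congr rfl fun j _ => Finset.sum_congr rfl fun k _ => by
    simp only [ζ, Pi.star_apply, RCLike.star_def]; ring

section Integrability

variable {N0 σ a b : ℝ} {W H F B : ℝ → ℂ}

lemma intervalIntegrable_Lam (hW : IntervalIntegrable W volume a b)
    (hW2 : IntervalIntegrable (fun ω => ‖W ω‖ ^ 2) volume a b)
    (hH : Continuous H) (hF : Continuous F) (hB : Continuous B) :
    IntervalIntegrable (Lam N0 σ W H F B) volume a b := by
  have hLam : Lam N0 σ W H F B = fun ω => ‖F ω‖ ^ 2 * (N0 + ‖H ω‖ ^ 2) * ‖W ω‖ ^ 2 +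
      σ * ‖F ω * B ω‖ ^ 2 - 2 * σ * ‖F ω‖ ^ 2 * ((H ω * (starRingEnd ℂ) (B ω)) * W ω).re := by
    funext ω
    rw [Lam, norm_mul, mul_pow, mul_right_comm (H ω)]
    ring
  have hBterm : Continuous fun ω => σ * ‖F ω * B ω‖ ^ 2 := by fun_prop
  rw [hLam]
  exact ((hW2.continuousOn_mul (by fun_prop)).add (hBterm.intervalIntegrable a b)).sub
    ((hW.re_mul_continuous (by fun_prop)).continuousOn_mul (by fun_prop))

lemma intervalIntegrable_log_sub_Lam_div (hW : IntervalIntegrable W volume a b)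
    (hW2 : IntervalIntegrable (fun ω => ‖W ω‖ ^ 2) volume a b)
    (hH : Continuous H) (hF : Continuous F) (hB : Continuous B) :
    IntervalIntegrable (fun ω => Real.log (1 + ‖F ω‖ ^ 2) - ‖F ω‖ ^ 2 -
      Lam N0 σ W H F B ω / (1 + ‖F ω‖ ^ 2)) volume a b := by
  have hLog : Continuous fun ω => Real.log (1 + ‖F ω‖ ^ 2) - ‖F ω‖ ^ 2 := by
    fun_prop (disch := intro; positivity)
  have hInv : Continuous fun ω => (1 + ‖F ω‖ ^ 2)⁻¹ := by
    fun_prop (disch := intro; positivity)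
  simpa only [div_eq_mul_inv] using (hLog.intervalIntegrable a b).sub
    ((intervalIntegrable_Lam hW hW2 hH hF hB).mul_continuousOn hInv.continuousOn)

lemma intervalIntegrable_re_conj_mul_sub (hW : IntervalIntegrable W volume a b)
    (hH : Continuous H) (hF : Continuous F) (hB : Continuous B) :
    IntervalIntegrable (fun ω => ((starRingEnd ℂ) (F ω) * (W ω * H ω - (σ : ℂ) * B ω)).re)
      volume a b := by
  have hsplit : (fun ω => ((starRingEnd ℂ) (F ω) * (W ω * H ω - (σ : ℂ) * B ω)).re) =
      fun ω => (((starRingEnd ℂ) (F ω) * H ω) * W ω).re -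
        ((σ : ℂ) * ((starRingEnd ℂ) (F ω) * B ω)).re := by
    funext ω
    rw [← Complex.sub_re]
    ring_nf
  have hBterm : Continuous fun ω => ((σ : ℂ) * ((starRingEnd ℂ) (F ω) * B ω)).re := by fun_prop
  rw [hsplit]
  exact (hW.re_mul_continuous (by fun_prop)).sub (hBterm.intervalIntegrable a b)

end Integrability

-- In `ILB` the second integral lies inside the scope of the first `∫`; integrating that
-- constant over `[-π, π]` gives back the intended value.
lemma ILB_eq_integral_milbIntegrand {N0 σ : ℝ} {W H F B : ℝ → ℂ}
    (hW : IntervalIntegrable W volume (-π) π)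
    (hW2 : IntervalIntegrable (fun ω => ‖W ω‖ ^ 2) volume (-π) π)
    (hH : Continuous H) (hF : Continuous F) (hB : Continuous B) :
    ILB N0 σ W H F B = 1 / (2 * π) * ∫ ω in (-π)..π, milbIntegrand N0 σ W H F B ω := by
  have hMain := intervalIntegrable_log_sub_Lam_div (N0 := N0) (σ := σ) hW hW2 hH hF hB
  have hCross := intervalIntegrable_re_conj_mul_sub (σ := σ) hW hH hF hB
  unfold ILB milbIntegrand
  rw [intervalIntegral.integral_add hMain intervalIntegrable_const,
    intervalIntegral.integral_add hMain (hCross.const_mul 2), intervalIntegral.integral_const,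
    intervalIntegral.integral_const_mul, smul_eq_mul]
  field_simp
  ring

lemma integral_milbBound_Bdtft (L ν : ℕ) {N0 : ℝ} (hN0 : 0 < N0) (σ : ℝ) {H F : ℝ → ℂ}
    (hH : Continuous H) (hF : Continuous F) (b : Fin (L - ν - 1) → ℂ) :
    1 / (2 * π) * ∫ ω in (-π)..π, milbBound N0 σ H F (Bdtft b) ω =
      Jfun N0 H F + 2 * (b ⬝ᵥ eps1 L ν N0 σ H F).re + (b ⬝ᵥ eps2 L ν N0 σ H F *ᵥ star b).re := by
  have hB := continuous_Bdtft (L := L) (ν := ν) b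
  have hM := continuous_Mker hN0 hH
  have hMt := continuous_Mtker hN0 σ hH
  have iOne : IntervalIntegrable (fun _ => (1 : ℝ)) volume (-π) π := intervalIntegrable_const
  have iJ : IntervalIntegrable (fun ω => Real.log (1 + ‖F ω‖ ^ 2) +
      Mker N0 H ω * (1 + ‖F ω‖ ^ 2)) volume (-π) π :=
    Continuous.intervalIntegrable (by fun_prop (disch := intro; positivity)) _ _
  have iLin : IntervalIntegrable (fun ω => 2 * σ * (Mker N0 H ω *
      (F ω * (starRingEnd ℂ) (Bdtft b ω)).re)) volume (-π) π :=
    Continuous.intervalIntegrable (by fun_prop) _ _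
  have iQuad : IntervalIntegrable (fun ω => Mtker N0 σ H ω * ‖F ω‖ ^ 2 / (1 + ‖F ω‖ ^ 2) *
      ‖Bdtft b ω‖ ^ 2) volume (-π) π :=
    Continuous.intervalIntegrable (by fun_prop (disch := intro; positivity)) _ _
  rw [← integral_Mker_re_Bdtft_eq_eps1 L ν hN0 σ hH hF,
    ← integral_Mtker_norm_Bdtft_eq_eps2 L ν hN0 σ hH hF, Jfun]
  unfold milbBound
  rw [intervalIntegral.integral_add ((iOne.add iJ).add iLin) iQuad,
    intervalIntegral.integral_add (iOne.add iJ) iLin, intervalIntegral.integral_add iOne iJ,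
    intervalIntegral.integral_const, smul_eq_mul]
  field_simp
  ring

lemma ILB_le_quadratic (L ν : ℕ) {N0 : ℝ} (hN0 : 0 < N0) (σ : ℝ) {W H F : ℝ → ℂ}
    (hW : IntervalIntegrable W volume (-π) π)
    (hW2 : IntervalIntegrable (fun ω => ‖W ω‖ ^ 2) volume (-π) π)
    (hH : Continuous H) (hF : Continuous F) (b : Fin (L - ν - 1) → ℂ) :
    ILB N0 σ W H F (Bdtft b) ≤ Jfun N0 H F + 2 * (b ⬝ᵥ eps1 L ν N0 σ H F).re +
      (b ⬝ᵥ eps2 L ν N0 σ H F *ᵥ star b).re := by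
  have hB := continuous_Bdtft (L := L) (ν := ν) b
  have hMilb : IntervalIntegrable (milbIntegrand N0 σ W H F (Bdtft b)) volume (-π) π :=
    (intervalIntegrable_log_sub_Lam_div hW hW2 hH hF hB).add
      ((intervalIntegrable_re_conj_mul_sub hW hH hF hB).const_mul 2)
  have hBound : IntervalIntegrable (milbBound N0 σ H F (Bdtft b)) volume (-π) π := by
    have := continuous_Mker hN0 hH
    have := continuous_Mtker hN0 σ hH
    refine Continuous.intervalIntegrable ?_ _ _
    unfold milbBound
    fun_prop (disch := intro; positivity)
  rw [ILB_eq_integral_milbIntegrand hW hW2 hH hF hB, ← integral_milbBound_Bdtft L ν hN0 σ hH hF]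
  gcongr
  exact intervalIntegral.integral_mono_on (by linarith [pi_pos]) hMilb hBound
    fun ω _ => milbIntegrand_le hN0 σ W H F (Bdtft b) ω

theorem stmt17_general (L ν : ℕ) (h : Fin L → ℂ) (f : Fin (ν + 1) → ℂ)
    (N0 σ : ℝ) (hN0 : 0 < N0)
    (hNegDef : (-(eps2 L ν N0 σ (Hdtft h) (Fdtft f))).PosDef) :
    ∀ W : ℝ → ℂ, Measurable W →
      IntegrableOn (fun ω => ‖W ω‖ ^ 2) (Set.Icc (-π) π) →
      ∀ b : Fin (L - ν - 1) → ℂ,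
        ILB N0 σ W (Hdtft h) (Fdtft f) (Bdtft (L := L) (ν := ν) b) ≤
          Jfun N0 (Hdtft h) (Fdtft f) -
            (star (eps1 L ν N0 σ (Hdtft h) (Fdtft f)) ⬝ᵥ
              (eps2 L ν N0 σ (Hdtft h) (Fdtft f))⁻¹.mulVec
                (eps1 L ν N0 σ (Hdtft h) (Fdtft f))).re := by
  intro W hWm hW2 b
  have hπ : -π ≤ π := by linarith [pi_pos]
  have hW2' : IntervalIntegrable (fun ω => ‖W ω‖ ^ 2) volume (-π) π := by
    rw [← Set.uIcc_of_le hπ] at hW2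
    exact hW2.intervalIntegrable
  have hILB := ILB_le_quadratic L ν hN0 σ
    (intervalIntegrable_of_integrableOn_sq_norm hπ hWm.aestronglyMeasurable hW2) hW2'
    (continuous_Hdtft h) (continuous_Fdtft f) b
  have hMax := re_dotProduct_mulVec_add_le_of_posDef_neg hNegDef
    (eps1 L ν N0 σ (Hdtft h) (Fdtft f)) (star b)
  simp only [star_star, RCLike.re_to_complex] at hMax
  linarith

/-- Equation (27) of Theorem 1 as an upper bound: `J(F) − ε₁†ε₂⁻¹ε₁` dominates
`I_LB` over all square-integrable prefilters `W` and feedback coefficients `b`. -/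
theorem stmt17 (L ν : ℕ) (hLν : ν + 1 < L) (h : Fin L → ℂ) (f : Fin (ν + 1) → ℂ)
    (N0 σ : ℝ) (hN0 : 0 < N0) (hσ0 : 0 < σ) (hσ1 : σ ≤ 1)
    (hNegDef : (-(eps2 L ν N0 σ (Hdtft h) (Fdtft f))).PosDef) :
    ∀ W : ℝ → ℂ, Measurable W →
      IntegrableOn (fun ω => ‖W ω‖ ^ 2) (Set.Icc (-π) π) →
      ∀ b : Fin (L - ν - 1) → ℂ,
        ILB N0 σ W (Hdtft h) (Fdtft f) (Bdtft (L := L) (ν := ν) b) ≤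
          Jfun N0 (Hdtft h) (Fdtft f) -
            (star (eps1 L ν N0 σ (Hdtft h) (Fdtft f)) ⬝ᵥ
              (eps2 L ν N0 σ (Hdtft h) (Fdtft f))⁻¹.mulVec
                (eps1 L ν N0 σ (Hdtft h) (Fdtft f))).re :=
  stmt17_general L ν h f N0 σ hN0 hNegDef
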